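/- arXiv:1606.08978 — 2 statements merged into one kernel-verified Lean document; each statement's English description precedes it below -/
import Mathlib

section
/- The process (V_n/n)_{n≥1} is a supermartingale with respect to the filtration (F_n)_{n≥1}. Moreover, if c0 = 1, then (V_n/n)_{n≥1} is a martingale with respect to (F_n)_{n≥1}. -/
open MeasureTheory
open scoped ENNReal

/-- The filtration `(F_{n+1})_{n≥0}`, used to view a process indexed by `{1, 2, …}` as a
process indexed by `ℕ`. -/
def shiftFiltration {Ω : Type*} {m : MeasurableSpace Ω} (ℱ : Filtration ℕ m) :
    Filtration ℕ m where
  seq n := ℱ (n + 1)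
  mono' _ _ hij := ℱ.mono (by omega)
  le' n := ℱ.le (n + 1)

/-- Let `(V_n)_{n≥1}` be an `(F_n)`-adapted `ℕ`-valued process with `V_1 ∈ {0,1}` a.s.,
`V_{n+1} ∈ {V_n, V_n + 1}` a.s., and `P(V_{n+1} = V_n + 1 | F_n) = min(c0, V_n/n)` a.s. for
every `n ≥ 1`, where `c0 ∈ (0,1]`. Then `(V_n/n)_{n≥1}` is a supermartingale with respect to
`(F_n)_{n≥1}`, and a martingale if `c0 = 1`. -/
theorem stmt5 {Ω : Type*} {m : MeasurableSpace Ω} (μ : Measure Ω) [IsProbabilityMeasure μ]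
    (ℱ : Filtration ℕ m) (c0 : ℝ) (hc0 : 0 < c0) (hc0' : c0 ≤ 1)
    (V : ℕ → Ω → ℕ)
    (hadapt : ∀ n, 1 ≤ n → Measurable[ℱ n] (V n))
    (hV1 : ∀ᵐ ω ∂μ, V 1 ω = 0 ∨ V 1 ω = 1)
    (hstep : ∀ n, 1 ≤ n → ∀ᵐ ω ∂μ, V (n + 1) ω = V n ω ∨ V (n + 1) ω = V n ω + 1)
    (hcond : ∀ n, 1 ≤ n →
      μ[Set.indicator {ω | V (n + 1) ω = V n ω + 1} (fun _ => (1 : ℝ)) | ℱ n]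
        =ᵐ[μ] fun ω => min c0 ((V n ω : ℝ) / n)) :
    Supermartingale (fun n ω => (V (n + 1) ω : ℝ) / (n + 1)) (shiftFiltration ℱ) μ ∧
      (c0 = 1 →
        Martingale (fun n ω => (V (n + 1) ω : ℝ) / (n + 1)) (shiftFiltration ℱ) μ) := by
  -- a.s. bound V_{n+1} ≤ n+1
  have hbound : ∀ n : ℕ, ∀ᵐ ω ∂μ, V (n + 1) ω ≤ n + 1 := by
    intro n
    induction n with
    | zero => filter_upwards [hV1] with ω h; show V 1 ω ≤ 1; omega
    | succ k ih =>
      filter_upwards [ih, hstep (k + 1) (by omega)] with ω h1 h2; omega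
  -- measurability of V n (real-valued) w.r.t. m
  have hmeasV : ∀ n : ℕ, 1 ≤ n → Measurable fun ω => (V n ω : ℝ) :=
    fun n hn => measurable_from_top.comp ((hadapt n hn).mono (ℱ.le n) le_rfl)
  -- integrability of V n (real-valued)
  have hintV : ∀ n : ℕ, Integrable (fun ω => (V (n + 1) ω : ℝ)) μ := by
    intro n
    refine (integrable_const ((n : ℝ) + 1)).mono'
      (hmeasV (n + 1) (by omega)).aestronglyMeasurable ?_
    filter_upwards [hbound n] with ω h
    rw [Real.norm_eq_abs, abs_of_nonneg (by positivity)]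
    exact_mod_cast h
  -- the indicator sets are measurable
  have hAmeas : ∀ n : ℕ, 1 ≤ n → MeasurableSet {ω | V (n + 1) ω = V n ω + 1} := by
    intro n hn
    exact measurableSet_eq_fun
      ((hadapt (n + 1) (by omega)).mono (ℱ.le _) le_rfl)
      (((hadapt n hn).mono (ℱ.le n) le_rfl).add measurable_const)
  have hAint : ∀ n : ℕ, 1 ≤ n →
      Integrable (Set.indicator {ω | V (n + 1) ω = V n ω + 1} (fun _ => (1 : ℝ))) μ := by
    intro n hn
    exact (integrable_const (1 : ℝ)).indicator (hAmeas n hn)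
  -- key conditional expectation computation
  have key : ∀ n : ℕ, 1 ≤ n →
      μ[(fun ω => (V (n + 1) ω : ℝ)) | ℱ n]
        =ᵐ[μ] fun ω => (V n ω : ℝ) + min c0 ((V n ω : ℝ) / n) := by
    intro n hn
    have hE : (fun ω => (V (n + 1) ω : ℝ)) =ᵐ[μ]
        fun ω => (V n ω : ℝ) + Set.indicator {ω | V (n + 1) ω = V n ω + 1}
          (fun _ => (1 : ℝ)) ω := by
      filter_upwards [hstep n hn] with ω h
      rcases h with h | h
      · rw [Set.indicator_of_notMem (by simp [Set.mem_setOf_eq, h])]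
        simp [h]
      · rw [Set.indicator_of_mem (by simpa [Set.mem_setOf_eq] using h)]
        rw [h]; push_cast; ring
    have hVn : Integrable (fun ω => (V n ω : ℝ)) μ := by
      obtain ⟨k, rfl⟩ : ∃ k, n = k + 1 := ⟨n - 1, by omega⟩
      exact hintV k
    calc μ[(fun ω => (V (n + 1) ω : ℝ)) | ℱ n]
        =ᵐ[μ] μ[(fun ω => (V n ω : ℝ)) + Set.indicator {ω | V (n + 1) ω = V n ω + 1}
            (fun _ => (1 : ℝ)) | ℱ n] := condExp_congr_ae hE
      _ =ᵐ[μ] μ[(fun ω => (V n ω : ℝ)) | ℱ n] +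
            μ[Set.indicator {ω | V (n + 1) ω = V n ω + 1} (fun _ => (1 : ℝ)) | ℱ n] :=
          condExp_add hVn (hAint n hn) _
      _ =ᵐ[μ] fun ω => (V n ω : ℝ) + min c0 ((V n ω : ℝ) / n) := by
          have h1 : μ[(fun ω => (V n ω : ℝ)) | ℱ n] = fun ω => (V n ω : ℝ) :=
            condExp_of_stronglyMeasurable (ℱ.le n)
              (measurable_from_top.comp (hadapt n hn)).stronglyMeasurable
              (by
                obtain ⟨k, rfl⟩ : ∃ k, n = k + 1 := ⟨n - 1, by omega⟩
                exact hintV k)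
          rw [h1]
          filter_upwards [hcond n hn] with ω hω
          simp only [Pi.add_apply, hω]
    -- done
  -- scaled version
  have key2 : ∀ n : ℕ,
      μ[(fun ω => (V (n + 1 + 1) ω : ℝ) / (↑(n + 1) + 1)) | ℱ (n + 1)]
        =ᵐ[μ] fun ω =>
          ((V (n + 1) ω : ℝ) + min c0 ((V (n + 1) ω : ℝ) / ((n : ℝ) + 1))) / ((n : ℝ) + 2) := by
    intro n
    have hsmul : (fun ω => (V (n + 1 + 1) ω : ℝ) / (↑(n + 1) + 1))
        = ((n : ℝ) + 2)⁻¹ • fun ω => (V (n + 1 + 1) ω : ℝ) := by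
      funext ω
      simp only [Pi.smul_apply, smul_eq_mul]
      push_cast
      ring
    rw [hsmul]
    refine (condExp_smul _ _ _).trans ?_
    have hk := key (n + 1) (by omega)
    filter_upwards [hk] with ω hω
    simp only [Pi.smul_apply, smul_eq_mul]
    push_cast at hω ⊢
    rw [hω]
    ring
  -- adaptedness and integrability of the shifted process
  have hadp : StronglyAdapted (shiftFiltration ℱ) fun n ω => (V (n + 1) ω : ℝ) / (n + 1) := by
    intro n
    have : Measurable[ℱ (n + 1)] fun ω => (V (n + 1) ω : ℝ) / (n + 1) :=
      (measurable_from_top.comp (hadapt (n + 1) (by omega))).div measurable_const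
    exact this.stronglyMeasurable
  have hint : ∀ n : ℕ, Integrable (fun ω => (V (n + 1) ω : ℝ) / (n + 1)) μ :=
    fun n => (hintV n).div_const _
  constructor
  · refine supermartingale_nat hadp hint fun n => ?_
    show μ[(fun ω => (V (n + 1 + 1) ω : ℝ) / (↑(n + 1) + 1)) | ℱ (n + 1)]
        ≤ᵐ[μ] fun ω => (V (n + 1) ω : ℝ) / ((n : ℝ) + 1)
    filter_upwards [key2 n] with ω hω
    rw [hω]
    set x := (V (n + 1) ω : ℝ) with hx
    have hx0 : (0 : ℝ) ≤ x := Nat.cast_nonneg _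
    have h1 : (0 : ℝ) < (n : ℝ) + 1 := by positivity
    have h2 : (0 : ℝ) < (n : ℝ) + 2 := by positivity
    have hmin : min c0 (x / ((n : ℝ) + 1)) ≤ x / ((n : ℝ) + 1) := min_le_right _ _
    have hle : (x + min c0 (x / ((n : ℝ) + 1))) / ((n : ℝ) + 2)
        ≤ (x + x / ((n : ℝ) + 1)) / ((n : ℝ) + 2) := by gcongr
    refine hle.trans (le_of_eq ?_)
    field_simp
    ring
  · intro hc1
    subst hc1
    refine martingale_nat hadp hint fun n => ?_
    have goal' : μ[(fun ω => (V (n + 1 + 1) ω : ℝ) / (↑(n + 1) + 1)) | ℱ (n + 1)]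
        =ᵐ[μ] fun ω => (V (n + 1) ω : ℝ) / ((n : ℝ) + 1) := by
      refine (key2 n).trans ?_
      filter_upwards [hbound n] with ω hωb
      set x := (V (n + 1) ω : ℝ) with hx
      have hx0 : (0 : ℝ) ≤ x := Nat.cast_nonneg _
      have h1 : (0 : ℝ) < (n : ℝ) + 1 := by positivity
      have hxle : x ≤ (n : ℝ) + 1 := by rw [hx]; exact_mod_cast hωb
      have hmin : min 1 (x / ((n : ℝ) + 1)) = x / ((n : ℝ) + 1) :=
        min_eq_right ((div_le_one h1).mpr hxle)
      rw [hmin]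
      field_simp
      ring
    exact goal'.symm
end

section
/- For every c0 ∈ (0,1] there exist δ > 0 and p0 > 0 with the following property: for every filtered probability space (Ω, F, (F_n)_{n≥1}, P) and every (F_n)-adapted ℕ-valued process (V_n)_{n≥1} such that V_1 ∈ {0,1} almost surely, P(V_1 = 1) ≥ c0, almost surely V_{n+1} ∈ {V_n, V_n + 1} for every n ≥ 1, and P(V_{n+1} = V_n + 1 | F_n) ≥ min(c0, V_n/n) almost surely for every n ≥ 1, one has P( V_n > δ·n for all n ≥ 1 ) ≥ p0. -/
open MeasureTheory
open scoped ENNReal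

lemma taylor_sq (c x y : ℝ) :
    (max (c - y) 0)^2 ≤ (max (c - x) 0)^2 - 2 * (max (c - x) 0) * (y - x) + (y - x)^2 := by
  rcases le_or_gt (c - x) 0 with h | h
  · rw [max_eq_right h]
    rcases le_or_gt (c - y) 0 with h' | h'
    · rw [max_eq_right h']; nlinarith
    · rw [max_eq_left h'.le]; nlinarith
  · rw [max_eq_left h.le]
    rcases le_or_gt (c - y) 0 with h' | h'
    · rw [max_eq_right h']; nlinarith
    · rw [max_eq_left h'.le]; nlinarith

set_option maxHeartbeats 1000000 in
lemma step_ineq (c0 : ℝ) (hc0 : 0 < c0) (n v : ℕ) (hn : 1 ≤ n) (hv : v ≤ n)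
    (q : ℝ) (hq1 : min c0 ((v : ℝ) / n) ≤ q) (hq2 : q ≤ 1) :
    q * ((max (c0 - ((v : ℝ) + 1) / ((n : ℝ) + 1)) 0)^2
        - (max (c0 - (v : ℝ) / ((n : ℝ) + 1)) 0)^2)
      + (max (c0 - (v : ℝ) / ((n : ℝ) + 1)) 0)^2 + 1 / ((n : ℝ) + 1)
    ≤ (max (c0 - (v : ℝ) / n) 0)^2 + 1 / n := by
  have hn0 : (0 : ℝ) < n := by exact_mod_cast hn
  have hn1 : (0 : ℝ) < (n : ℝ) + 1 := by linarith
  have hvn : (v : ℝ) ≤ n := by exact_mod_cast hv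
  have hv0 : (0 : ℝ) ≤ v := Nat.cast_nonneg v
  set x : ℝ := (v : ℝ) / n with hxdef
  set xp : ℝ := ((v : ℝ) + 1) / ((n : ℝ) + 1) with hxpdef
  set xm : ℝ := (v : ℝ) / ((n : ℝ) + 1) with hxmdef
  set a : ℝ := max (c0 - x) 0 with hadef
  have ha0 : 0 ≤ a := le_max_right _ _
  have hx0 : 0 ≤ x := by positivity
  have hq0 : 0 ≤ q := le_trans (le_min hc0.le hx0) hq1
  have h1q : 0 ≤ 1 - q := by linarith
  have hdp : xp - x = ((n : ℝ) - v) / (n * ((n : ℝ) + 1)) := by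
    rw [hxpdef, hxdef]; field_simp; ring
  have hdm : xm - x = -((v : ℝ) / (n * ((n : ℝ) + 1))) := by
    rw [hxmdef, hxdef]; field_simp; ring
  have hdp0 : 0 ≤ xp - x := by
    rw [hdp]; exact div_nonneg (by linarith) (by positivity)
  have hdp1 : xp - x ≤ 1 / ((n : ℝ) + 1) := by
    rw [hdp, div_le_div_iff₀ (by positivity) hn1]; nlinarith
  have hdm0 : xm - x ≤ 0 := by rw [hdm]; simp; positivity
  have hdm1 : -(1 / ((n : ℝ) + 1)) ≤ xm - x := by
    rw [hdm, neg_le_neg_iff, div_le_div_iff₀ (by positivity) hn1]; nlinarith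
  have hmean : q * (xp - x) + (1 - q) * (xm - x) = (q - x) / ((n : ℝ) + 1) := by
    rw [hdp, hdm, hxdef]; field_simp; ring
  have haq : 0 ≤ a * (q - x) := by
    rcases le_or_gt (c0 - x) 0 with h | h
    · rw [hadef, max_eq_right h]; simp
    · have hqx : x ≤ q := by
        have : min c0 x = x := min_eq_right (by linarith)
        rw [hxdef] at this ⊢
        calc (v:ℝ)/n = min c0 ((v:ℝ)/n) := this.symm
          _ ≤ q := hq1
      exact mul_nonneg ha0 (by linarith)
  have T1 := taylor_sq c0 x xp
  have T2 := taylor_sq c0 x xm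
  have E1 : q * (max (c0 - xp) 0)^2
      ≤ q * (a^2 - 2 * a * (xp - x) + (xp - x)^2) := mul_le_mul_of_nonneg_left T1 hq0
  have E2 : (1 - q) * (max (c0 - xm) 0)^2
      ≤ (1 - q) * (a^2 - 2 * a * (xm - x) + (xm - x)^2) := mul_le_mul_of_nonneg_left T2 h1q
  have hinv0 : 0 ≤ 1 / ((n : ℝ) + 1) := by positivity
  have hsq1 : (xp - x)^2 ≤ (1 / ((n : ℝ) + 1))^2 := sq_le_sq' (by linarith) hdp1
  have hsq2 : (xm - x)^2 ≤ (1 / ((n : ℝ) + 1))^2 := sq_le_sq' hdm1 (by linarith)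
  have hq1sq : q * (xp - x)^2 + (1 - q) * (xm - x)^2 ≤ (1 / ((n : ℝ) + 1))^2 := by
    have a1 := mul_le_mul_of_nonneg_left hsq1 hq0
    have a2 := mul_le_mul_of_nonneg_left hsq2 h1q
    have : q * (1 / ((n : ℝ) + 1))^2 + (1 - q) * (1 / ((n : ℝ) + 1))^2
        = (1 / ((n : ℝ) + 1))^2 := by ring
    linarith
  have htail : 1 / ((n : ℝ) + 1) + (1 / ((n : ℝ) + 1))^2 ≤ 1 / n := by
    have hrw : 1 / ((n : ℝ) + 1) + (1 / ((n : ℝ) + 1))^2 = ((n : ℝ) + 2) / ((n : ℝ) + 1)^2 := by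
      field_simp; ring
    rw [hrw, div_le_div_iff₀ (by positivity) hn0]
    nlinarith
  have hcross : -(2 * a * ((q - x) / ((n : ℝ) + 1))) ≤ 0 := by
    have h := div_nonneg haq hn1.le
    have h2 : 2 * a * ((q - x) / ((n : ℝ) + 1)) = 2 * (a * (q - x) / ((n : ℝ) + 1)) := by
      ring
    linarith [h2.le, h2.ge]
  have hexp : q * (a^2 - 2 * a * (xp - x) + (xp - x)^2)
      + (1 - q) * (a^2 - 2 * a * (xm - x) + (xm - x)^2)
      = a^2 - 2 * a * (q * (xp - x) + (1 - q) * (xm - x))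
        + (q * (xp - x)^2 + (1 - q) * (xm - x)^2) := by ring
  have hsum : q * (max (c0 - xp) 0)^2 + (1 - q) * (max (c0 - xm) 0)^2
      ≤ a^2 - 2 * a * ((q - x) / ((n : ℝ) + 1))
        + (q * (xp - x)^2 + (1 - q) * (xm - x)^2) := by
    rw [← hmean]; linarith [E1, E2, hexp.le, hexp.ge]
  have hrw : q * ((max (c0 - xp) 0)^2 - (max (c0 - xm) 0)^2) + (max (c0 - xm) 0)^2
      = q * (max (c0 - xp) 0)^2 + (1 - q) * (max (c0 - xm) 0)^2 := by ring
  rw [hrw]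
  linarith [hsum, hcross, hq1sq, htail]
noncomputable def Hf (c0 : ℝ) : ℝ → ℝ := fun y => (max (c0 - y) 0)^2

lemma Hf_cont (c0 : ℝ) : Continuous (Hf c0) := by
  unfold Hf; fun_prop

lemma Hf_nonneg (c0 y : ℝ) : 0 ≤ Hf c0 y := sq_nonneg _

lemma Hf_le_one (c0 : ℝ) (hc0' : c0 ≤ 1) (y : ℝ) (hy : 0 ≤ y) : Hf c0 y ≤ 1 := by
  unfold Hf
  have h1 : max (c0 - y) 0 ≤ 1 := by
    apply max_le (by linarith) zero_le_one
  nlinarith [le_max_right (c0 - y) (0:ℝ)]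

example : True := trivial

lemma key_step {Ω : Type} {m : MeasurableSpace Ω} (μ : Measure Ω) [IsProbabilityMeasure μ]
    (ℱ : Filtration ℕ m) (V : ℕ → Ω → ℕ) (c0 : ℝ) (hc0 : 0 < c0) (hc0' : c0 ≤ 1)
    (n : ℕ) (hn : 1 ≤ n)
    (hmeasn : Measurable[ℱ n] (V n)) (hmeasn1 : Measurable[ℱ (n+1)] (V (n+1)))
    (hstepn : ∀ᵐ ω ∂μ, V (n+1) ω = V n ω ∨ V (n+1) ω = V n ω + 1)
    (hVlen : ∀ᵐ ω ∂μ, V n ω ≤ n)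
    (hcondn : (fun ω => min c0 ((V n ω : ℝ) / n)) ≤ᵐ[μ]
      μ[Set.indicator {ω | V (n + 1) ω = V n ω + 1} (fun _ => (1 : ℝ)) | ℱ n])
    {G : Set Ω} (hG : MeasurableSet[ℱ n] G) :
    ∫ ω in G, (Hf c0 ((V (n+1) ω : ℝ) / ((n : ℝ) + 1)) + 1 / ((n : ℝ) + 1)) ∂μ
      ≤ ∫ ω in G, (Hf c0 ((V n ω : ℝ) / (n : ℝ)) + 1 / (n : ℝ)) ∂μ := by
  have hle : ℱ n ≤ m := ℱ.le n
  have hGm : MeasurableSet G := hle _ hG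
  have hVnm : Measurable (V n) := hmeasn.mono hle le_rfl
  have hVn1m : Measurable (V (n+1)) := hmeasn1.mono (ℱ.le (n+1)) le_rfl
  set inc : Set Ω := {ω | V (n + 1) ω = V n ω + 1} with hincdef
  have hincm : MeasurableSet inc :=
    measurableSet_eq_fun hVn1m (hVnm.add_const 1)
  set ind : Ω → ℝ := inc.indicator (fun _ => (1 : ℝ)) with hinddef
  have hind_int : Integrable ind μ := (integrable_const 1).indicator hincm
  have hind01 : ∀ ω, 0 ≤ ind ω ∧ ind ω ≤ 1 := by
    intro ω
    by_cases hω : ω ∈ inc <;> simp [hinddef, hω]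
  set q : Ω → ℝ := μ[ind | ℱ n] with hqdef
  have hq_int : Integrable q μ := integrable_condExp
  -- the ℝ-cast of V n is ℱ n-measurable
  have hVnr : Measurable[ℱ n] (fun ω => (V n ω : ℝ)) :=
    measurable_from_nat.comp hmeasn
  set g : Ω → ℝ := fun ω =>
    Hf c0 (((V n ω : ℝ) + 1) / ((n : ℝ) + 1)) - Hf c0 ((V n ω : ℝ) / ((n : ℝ) + 1)) with hgdef
  set b : Ω → ℝ := fun ω => Hf c0 ((V n ω : ℝ) / ((n : ℝ) + 1)) + 1 / ((n : ℝ) + 1) with hbdef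
  have hgmeas : Measurable[ℱ n] g := by
    apply Measurable.sub
    · exact ((Hf_cont c0).measurable).comp ((hVnr.add_const 1).div_const _)
    · exact ((Hf_cont c0).measurable).comp (hVnr.div_const _)
  have hbmeas : Measurable[ℱ n] b := by
    apply Measurable.add
    · exact ((Hf_cont c0).measurable).comp (hVnr.div_const _)
    · exact measurable_const
  have hgbdd : ∀ ω, ‖g ω‖ ≤ 2 := by
    intro ω
    have h1 := Hf_nonneg c0 (((V n ω : ℝ) + 1) / ((n : ℝ) + 1))
    have h2 := Hf_nonneg c0 ((V n ω : ℝ) / ((n : ℝ) + 1))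
    have h3 : Hf c0 (((V n ω : ℝ) + 1) / ((n : ℝ) + 1)) ≤ 1 :=
      Hf_le_one c0 hc0' _ (by positivity)
    have h4 : Hf c0 ((V n ω : ℝ) / ((n : ℝ) + 1)) ≤ 1 :=
      Hf_le_one c0 hc0' _ (by positivity)
    rw [Real.norm_eq_abs, abs_le]
    constructor <;> [skip; skip] <;> simp only [hgdef] <;> linarith
  have hbbdd : ∀ ω, ‖b ω‖ ≤ 2 := by
    intro ω
    have h2 := Hf_nonneg c0 ((V n ω : ℝ) / ((n : ℝ) + 1))
    have h4 : Hf c0 ((V n ω : ℝ) / ((n : ℝ) + 1)) ≤ 1 :=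
      Hf_le_one c0 hc0' _ (by positivity)
    have h5 : (0:ℝ) ≤ 1 / ((n : ℝ) + 1) := by positivity
    have h6 : 1 / ((n : ℝ) + 1) ≤ 1 := by
      rw [div_le_one (by positivity)]
      have : (1:ℝ) ≤ n := by exact_mod_cast hn
      linarith
    rw [Real.norm_eq_abs, abs_le]
    constructor <;> simp only [hbdef] <;> linarith
  have hgint : Integrable (fun ω => g ω * ind ω) μ :=
    hind_int.bdd_mul ((hgmeas.mono hle le_rfl).aestronglyMeasurable) (Filter.Eventually.of_forall hgbdd)
  have hbint : Integrable b μ := by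
    refine Integrable.mono' (integrable_const 2)
      ((hbmeas.mono hle le_rfl).aestronglyMeasurable) ?_
    exact Filter.Eventually.of_forall hbbdd
  have hgqint : Integrable (fun ω => g ω * q ω) μ :=
    hq_int.bdd_mul ((hgmeas.mono hle le_rfl).aestronglyMeasurable) (Filter.Eventually.of_forall hgbdd)
  -- a.e. rewriting of the (n+1)-term
  have hM1eq : ∀ᵐ ω ∂μ,
      Hf c0 ((V (n+1) ω : ℝ) / ((n : ℝ) + 1)) + 1 / ((n : ℝ) + 1) = g ω * ind ω + b ω := by
    filter_upwards [hstepn] with ω hω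
    by_cases hωi : ω ∈ inc
    · have hv : V (n+1) ω = V n ω + 1 := hωi
      simp only [hinddef, Set.indicator_of_mem hωi, hgdef, hbdef, mul_one, hv]
      push_cast
      ring
    · have hv : V (n+1) ω = V n ω := by
        rcases hω with h | h
        · exact h
        · exact absurd h hωi
      simp only [hinddef, Set.indicator_of_notMem hωi, hgdef, hbdef, mul_zero, hv]
      ring
  -- the conditional expectation bounds
  have hq_le_one : q ≤ᵐ[μ] fun _ => (1 : ℝ) := by
    have h1 : μ[(fun _ => (1:ℝ)) | ℱ n] = fun _ => (1:ℝ) := condExp_const hle (1:ℝ)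
    have h2 : q ≤ᵐ[μ] μ[(fun _ => (1:ℝ)) | ℱ n] := by
      apply condExp_mono hind_int (integrable_const 1)
      exact Filter.Eventually.of_forall fun ω => (hind01 ω).2
    rw [h1] at h2
    exact h2
  -- pointwise a.e. inequality
  have hptwise : ∀ᵐ ω ∂μ, g ω * q ω + b ω ≤ Hf c0 ((V n ω : ℝ) / (n : ℝ)) + 1 / (n : ℝ) := by
    filter_upwards [hVlen, hcondn, hq_le_one] with ω h1 h2 h3
    have := step_ineq c0 hc0 n (V n ω) hn h1 (q ω) h2 h3
    simp only [hgdef, hbdef, Hf]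
    linarith [this]
  -- chain of equalities
  have e1 : ∫ ω in G, (Hf c0 ((V (n+1) ω : ℝ) / ((n : ℝ) + 1)) + 1 / ((n : ℝ) + 1)) ∂μ
      = ∫ ω in G, (g ω * ind ω + b ω) ∂μ := by
    apply setIntegral_congr_ae hGm
    filter_upwards [hM1eq] with ω h _
    exact h
  have e2 : ∫ ω in G, (g ω * ind ω + b ω) ∂μ
      = (∫ ω in G, g ω * ind ω ∂μ) + ∫ ω in G, b ω ∂μ :=
    integral_add (hgint.integrableOn) (hbint.integrableOn)
  have e3 : ∫ ω in G, g ω * ind ω ∂μ = ∫ ω in G, g ω * q ω ∂μ := by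
    rw [← setIntegral_condExp hle hgint hG]
    apply setIntegral_congr_ae hGm
    have hmul := condExp_mul_of_stronglyMeasurable_left (hgmeas.stronglyMeasurable) hgint hind_int
    filter_upwards [hmul] with ω h _
    exact h
  have e4 : (∫ ω in G, g ω * q ω ∂μ) + ∫ ω in G, b ω ∂μ
      = ∫ ω in G, (g ω * q ω + b ω) ∂μ :=
    (integral_add (hgqint.integrableOn) (hbint.integrableOn)).symm
  rw [e1, e2, e3, e4]
  have hMn_int : Integrable (fun ω => Hf c0 ((V n ω : ℝ) / (n : ℝ)) + 1 / (n : ℝ)) μ := by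
    refine Integrable.mono' (integrable_const 2)
      ((((Hf_cont c0).measurable.comp (((measurable_from_nat.comp hVnm)).div_const _)).add
        measurable_const).aestronglyMeasurable) ?_
    refine Filter.Eventually.of_forall fun ω => ?_
    have h2 := Hf_nonneg c0 ((V n ω : ℝ) / (n : ℝ))
    have h4 : Hf c0 ((V n ω : ℝ) / (n : ℝ)) ≤ 1 := Hf_le_one c0 hc0' _ (by positivity)
    have h5 : (0:ℝ) ≤ 1 / (n : ℝ) := by positivity
    have h6 : 1 / (n : ℝ) ≤ 1 := by
      rw [div_le_one (by exact_mod_cast hn)]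
      exact_mod_cast hn
    rw [Real.norm_eq_abs, abs_le]
    constructor <;> linarith
  exact setIntegral_mono_ae (hgqint.add hbint).integrableOn hMn_int.integrableOn hptwise

lemma Hf_one (c0 : ℝ) (hc0' : c0 ≤ 1) : Hf c0 1 = 0 := by
  unfold Hf
  rw [max_eq_right (by linarith)]
  norm_num

lemma Hf_barrier (c0 : ℝ) (hc0 : 0 < c0) (y : ℝ) (hy : y ≤ c0 / 2) :
    (c0 / 2)^2 ≤ Hf c0 y := by
  unfold Hf
  have h1 : c0 / 2 ≤ max (c0 - y) 0 := le_max_of_le_left (by linarith)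
  nlinarith [le_max_right (c0 - y) (0:ℝ)]

/-- For every `c0 ∈ (0,1]` there exist `δ > 0` and `p0 > 0` such that for every filtered
probability space and every adapted `ℕ`-valued process `(V_n)_{n≥1}` with `V_1 ∈ {0,1}` a.s.,
`P(V_1 = 1) ≥ c0`, `V_{n+1} ∈ {V_n, V_n + 1}` a.s. and
`P(V_{n+1} = V_n + 1 | F_n) ≥ min(c0, V_n/n)` a.s. for all `n ≥ 1`, one has
`P(V_n > δ·n for all n ≥ 1) ≥ p0`. -/
theorem stmt6 (c0 : ℝ) (hc0 : 0 < c0) (hc0' : c0 ≤ 1) :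
    ∃ δ > (0 : ℝ), ∃ p0 > (0 : ℝ),
      ∀ (Ω : Type) (m : MeasurableSpace Ω) (μ : Measure Ω), IsProbabilityMeasure μ →
        ∀ (ℱ : Filtration ℕ m) (V : ℕ → Ω → ℕ),
          (∀ n, 1 ≤ n → Measurable[ℱ n] (V n)) →
          (∀ᵐ ω ∂μ, V 1 ω = 0 ∨ V 1 ω = 1) →
          ENNReal.ofReal c0 ≤ μ {ω | V 1 ω = 1} →
          (∀ n, 1 ≤ n → ∀ᵐ ω ∂μ, V (n + 1) ω = V n ω ∨ V (n + 1) ω = V n ω + 1) →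
          (∀ n, 1 ≤ n →
            (fun ω => min c0 ((V n ω : ℝ) / n)) ≤ᵐ[μ]
              μ[Set.indicator {ω | V (n + 1) ω = V n ω + 1} (fun _ => (1 : ℝ)) | ℱ n]) →
          ENNReal.ofReal p0 ≤ μ {ω | ∀ n : ℕ, 1 ≤ n → δ * n < (V n ω : ℝ)} := by
  classical
  set K : ℕ := max 1 ⌈8 / c0^2⌉₊ with hKdef
  have hK1 : 1 ≤ K := le_max_left _ _
  have hK8 : 8 / c0^2 ≤ (K : ℝ) := by
    refine le_trans (Nat.le_ceil _) ?_
    exact_mod_cast Nat.cast_le.2 (le_max_right _ _)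
  set lam : ℝ := (c0 / 2)^2 with hlamdef
  refine ⟨c0 / 2, by positivity, c0 ^ K / 2, by positivity, ?_⟩
  intro Ω m μ hprob ℱ V hmeas h01 hV1 hstep hcond
  have hVm : ∀ n, 1 ≤ n → Measurable (V n) := fun n hn => (hmeas n hn).mono (ℱ.le n) le_rfl
  -- a.s. V n ≤ n
  have hVle : ∀ n, 1 ≤ n → ∀ᵐ ω ∂μ, V n ω ≤ n := by
    intro n hn
    induction n with
    | zero => omega
    | succ k ih =>
      rcases Nat.eq_zero_or_pos k with hk | hk
      · subst hk
        filter_upwards [h01] with ω hω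
        simp only [zero_add] at *
        rcases hω with h | h <;> omega
      · filter_upwards [ih hk, hstep k hk] with ω h1 h2
        rcases h2 with h | h <;> omega
  -- the events A_k where V j = j for all 1 ≤ j ≤ k
  set Aset : ℕ → Set Ω := fun k => {ω | ∀ j, 1 ≤ j → j ≤ k → V j ω = j} with hAsetdef
  have hAset_meas : ∀ k, 1 ≤ k → MeasurableSet[ℱ k] (Aset k) := by
    intro k hk
    have hrw : Aset k = ⋂ j, {ω | 1 ≤ j → j ≤ k → V j ω = j} := by
      ext ω; simp [hAsetdef, Set.mem_iInter]
    rw [hrw]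
    refine MeasurableSet.iInter fun j => ?_
    by_cases hj : 1 ≤ j ∧ j ≤ k
    · have : {ω | 1 ≤ j → j ≤ k → V j ω = j} = V j ⁻¹' {j} := by
        ext ω; simp [hj.1, hj.2]
      rw [this]
      exact (ℱ.mono hj.2) _ ((hmeas j hj.1) (by trivial))
    · have : {ω | 1 ≤ j → j ≤ k → V j ω = j} = Set.univ := by
        ext ω; simp only [Set.mem_setOf_eq, Set.mem_univ, iff_true]
        intro h1 h2; exact absurd ⟨h1, h2⟩ hj
      rw [this]
      exact MeasurableSet.univ
  have hAset_m : ∀ k, 1 ≤ k → MeasurableSet (Aset k) :=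
    fun k hk => (ℱ.le k) _ (hAset_meas k hk)
  -- measure lower bound for Aset
  have hAlb : ∀ k, 1 ≤ k → c0 ^ k ≤ (μ (Aset k)).toReal := by
    intro k hk
    induction k, hk using Nat.le_induction with
    | base =>
      have hA1 : Aset 1 = {ω | V 1 ω = 1} := by
        ext ω
        simp only [hAsetdef, Set.mem_setOf_eq]
        constructor
        · intro h; exact h 1 le_rfl le_rfl
        · intro h j h1 h2
          have : j = 1 := le_antisymm h2 h1
          rw [this]; exact h
      rw [pow_one, hA1]
      calc c0 = (ENNReal.ofReal c0).toReal := by rw [ENNReal.toReal_ofReal hc0.le]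
        _ ≤ (μ {ω | V 1 ω = 1}).toReal :=
            ENNReal.toReal_mono (measure_ne_top μ _) hV1
    | succ k hk ih =>
      set inc : Set Ω := {ω | V (k + 1) ω = V k ω + 1} with hincdef
      have hincm : MeasurableSet inc :=
        measurableSet_eq_fun (hVm (k+1) (by omega)) ((hVm k hk).add_const 1)
      set ind : Ω → ℝ := inc.indicator (fun _ => (1 : ℝ)) with hinddef
      have hind_int : Integrable ind μ := (integrable_const 1).indicator hincm
      have hsub : Aset k ∩ inc ⊆ Aset (k + 1) := by
        intro ω ⟨h1, h2⟩ j hj1 hjk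
        rcases Nat.lt_or_ge j (k+1) with hj | hj
        · exact h1 j hj1 (by omega)
        · have hjeq : j = k + 1 := by omega
          rw [hjeq]
          have := h1 k hk le_rfl
          simp only [hincdef, Set.mem_setOf_eq] at h2
          omega
      have comp1 : (μ (Aset k ∩ inc)).toReal = ∫ ω in Aset k, ind ω ∂μ := by
        rw [hinddef, setIntegral_indicator hincm, setIntegral_const]
        simp
        rfl
      have comp2 : ∫ ω in Aset k, ind ω ∂μ = ∫ ω in Aset k, (μ[ind | ℱ k]) ω ∂μ :=
        (setIntegral_condExp (ℱ.le k) hind_int (hAset_meas k hk)).symm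
      have comp3 : ∫ ω in Aset k, (fun _ => c0) ω ∂μ ≤ ∫ ω in Aset k, (μ[ind | ℱ k]) ω ∂μ := by
        refine setIntegral_mono_on_ae (integrable_const c0).integrableOn
          integrable_condExp.integrableOn (hAset_m k hk) ?_
        filter_upwards [hcond k hk] with ω hω hmem
        have hVk : V k ω = k := hmem k hk le_rfl
        have : min c0 ((V k ω : ℝ) / k) = c0 := by
          rw [hVk, div_self (by positivity : ((k:ℕ):ℝ) ≠ 0)]
          exact min_eq_left hc0'
        calc c0 = min c0 ((V k ω : ℝ) / k) := this.symm
          _ ≤ _ := hω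
      have comp4 : ∫ ω in Aset k, (fun _ => c0) ω ∂μ = c0 * (μ (Aset k)).toReal := by
        rw [setIntegral_const]; simp [mul_comm]; exact Or.inl rfl
      have hmono : (μ (Aset k ∩ inc)).toReal ≤ (μ (Aset (k+1))).toReal :=
        ENNReal.toReal_mono (measure_ne_top μ _) (measure_mono hsub)
      calc c0 ^ (k + 1) = c0 * c0 ^ k := by ring
        _ ≤ c0 * (μ (Aset k)).toReal := by
            exact mul_le_mul_of_nonneg_left ih hc0.le
        _ = ∫ ω in Aset k, (fun _ => c0) ω ∂μ := comp4.symm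
        _ ≤ ∫ ω in Aset k, (μ[ind | ℱ k]) ω ∂μ := comp3
        _ = ∫ ω in Aset k, ind ω ∂μ := comp2.symm
        _ = (μ (Aset k ∩ inc)).toReal := comp1.symm
        _ ≤ (μ (Aset (k+1))).toReal := hmono
  -- the good events
  set Mfun : ℕ → Ω → ℝ := fun n ω => Hf c0 ((V n ω : ℝ) / (n : ℝ)) + 1 / (n : ℝ) with hMfundef
  set Gn : ℕ → Set Ω := fun n =>
    Aset K ∩ {ω | ∀ mm, K ≤ mm → mm ≤ n → (c0 / 2) * (mm : ℝ) < (V mm ω : ℝ)} with hGndef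
  have hGn_anti : ∀ a b : ℕ, a ≤ b → Gn b ⊆ Gn a := by
    intro a b hab ω ⟨h1, h2⟩
    exact ⟨h1, fun mm hm1 hm2 => h2 mm hm1 (le_trans hm2 hab)⟩
  have hGn_measF : ∀ n, K ≤ n → MeasurableSet[ℱ n] (Gn n) := by
    intro n hn
    refine MeasurableSet.inter ((ℱ.mono hn) _ (hAset_meas K hK1)) ?_
    have hrw : {ω | ∀ mm, K ≤ mm → mm ≤ n → (c0 / 2) * (mm : ℝ) < (V mm ω : ℝ)}
        = ⋂ mm, {ω | K ≤ mm → mm ≤ n → (c0 / 2) * (mm : ℝ) < (V mm ω : ℝ)} := by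
      ext ω; simp [Set.mem_iInter]
    rw [hrw]
    refine MeasurableSet.iInter fun mm => ?_
    by_cases hmm : K ≤ mm ∧ mm ≤ n
    · have : {ω | K ≤ mm → mm ≤ n → (c0 / 2) * (mm : ℝ) < (V mm ω : ℝ)}
          = V mm ⁻¹' {v : ℕ | (c0 / 2) * (mm : ℝ) < (v : ℝ)} := by
        ext ω; simp [hmm.1, hmm.2]
      rw [this]
      exact (ℱ.mono hmm.2) _ ((hmeas mm (le_trans hK1 hmm.1)) (by trivial))
    · have : {ω | K ≤ mm → mm ≤ n → (c0 / 2) * (mm : ℝ) < (V mm ω : ℝ)} = Set.univ := by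
        ext ω; simp only [Set.mem_setOf_eq, Set.mem_univ, iff_true]
        intro h1 h2; exact absurd ⟨h1, h2⟩ hmm
      rw [this]; exact MeasurableSet.univ
  have hGn_m : ∀ n, K ≤ n → MeasurableSet (Gn n) := fun n hn => (ℱ.le n) _ (hGn_measF n hn)
  have hAm : MeasurableSet (Aset K) := hAset_m K hK1
  -- integrability of Mfun n
  have hM_int : ∀ n, 1 ≤ n → Integrable (Mfun n) μ := by
    intro n hn
    refine Integrable.mono' (integrable_const 2)
      ((((Hf_cont c0).measurable.comp
        ((measurable_from_nat.comp (hVm n hn)).div_const _)).add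
        measurable_const).aestronglyMeasurable) ?_
    refine Filter.Eventually.of_forall fun ω => ?_
    have h2 := Hf_nonneg c0 ((V n ω : ℝ) / (n : ℝ))
    have h4 : Hf c0 ((V n ω : ℝ) / (n : ℝ)) ≤ 1 := Hf_le_one c0 hc0' _ (by positivity)
    have h5 : (0:ℝ) ≤ 1 / (n : ℝ) := by positivity
    have h6 : 1 / (n : ℝ) ≤ 1 := by
      rw [div_le_one (by exact_mod_cast hn)]
      exact_mod_cast hn
    rw [Real.norm_eq_abs, abs_le]
    constructor <;> simp only [hMfundef] <;> linarith
  have hM_nonneg : ∀ n ω, 1 ≤ n → 0 ≤ Mfun n ω := by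
    intro n ω hn
    have h2 := Hf_nonneg c0 ((V n ω : ℝ) / (n : ℝ))
    have h5 : (0:ℝ) ≤ 1 / (n : ℝ) := by positivity
    simp only [hMfundef]; linarith
  -- the supermartingale invariant
  have inv : ∀ n, K ≤ n →
      lam * (μ (Aset K \ Gn n)).toReal + ∫ ω in Gn n, Mfun n ω ∂μ
        ≤ (1 / (K : ℝ)) * (μ (Aset K)).toReal := by
    intro n hn
    induction n, hn using Nat.le_induction with
    | base =>
      have hGK : Gn K = Aset K := by
        ext ω
        constructor
        · exact fun h => h.1
        · intro h
          refine ⟨h, fun mm hm1 hm2 => ?_⟩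
          have hmmK : mm = K := le_antisymm hm2 hm1
          subst hmmK
          have hV : V K ω = K := h K hK1 le_rfl
          rw [hV]
          have hmm1 : (1:ℝ) ≤ (K:ℝ) := by exact_mod_cast hK1
          nlinarith
      rw [hGK, Set.diff_self]
      simp only [measure_empty, ENNReal.toReal_zero, mul_zero, zero_add]
      have hcongr : ∫ ω in Aset K, Mfun K ω ∂μ = ∫ _ω in Aset K, (1 / (K : ℝ)) ∂μ := by
        refine setIntegral_congr_fun hAm fun ω hω => ?_
        have hV : V K ω = K := hω K hK1 le_rfl
        simp only [hMfundef, hV]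
        rw [div_self (by positivity : ((K:ℕ):ℝ) ≠ 0), Hf_one c0 hc0', zero_add]
      rw [hcongr, setIntegral_const]
      rw [smul_eq_mul]
      ring_nf
      exact le_of_eq (by simp only [Measure.real]; ring)
    | succ n hn ih =>
      have hn1 : 1 ≤ n := le_trans hK1 hn
      have hnn1 : 1 ≤ n + 1 := by omega
      set bad : Set Ω := Gn n ∩ {ω | (V (n+1) ω : ℝ) ≤ (c0/2) * ((n:ℝ)+1)} with hbaddef
      have hbadsub : bad ⊆ Gn n := Set.inter_subset_left
      have hbad_m : MeasurableSet bad := by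
        refine (hGn_m n hn).inter ?_
        have : {ω | (V (n+1) ω : ℝ) ≤ (c0/2) * ((n:ℝ)+1)}
            = V (n+1) ⁻¹' {v : ℕ | (v : ℝ) ≤ (c0/2) * ((n:ℝ)+1)} := rfl
        rw [this]
        exact (hVm (n+1) hnn1) (by trivial)
      have hcastn : ((n+1 : ℕ) : ℝ) = (n : ℝ) + 1 := by push_cast; ring
      have hGn1rw : Gn (n+1) = Gn n ∩ {ω | (c0/2) * ((n:ℝ)+1) < (V (n+1) ω : ℝ)} := by
        ext ω
        simp only [hGndef, Set.mem_inter_iff, Set.mem_setOf_eq]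
        constructor
        · intro ⟨h1, h2⟩
          refine ⟨⟨h1, fun mm hm1 hm2 => h2 mm hm1 (by omega)⟩, ?_⟩
          have := h2 (n+1) (by omega) le_rfl
          rwa [hcastn] at this
        · intro ⟨⟨h1, h2⟩, h3⟩
          refine ⟨h1, fun mm hm1 hm2 => ?_⟩
          rcases Nat.lt_or_ge mm (n+1) with hmm | hmm
          · exact h2 mm hm1 (by omega)
          · have hmmeq : mm = n + 1 := by omega
            subst hmmeq
            rwa [hcastn]
      have hsplit : Gn n = Gn (n+1) ∪ bad := by
        ext ω
        rw [hGn1rw]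
        simp only [hbaddef, Set.mem_union, Set.mem_inter_iff, Set.mem_setOf_eq]
        constructor
        · intro h
          rcases le_or_gt ((V (n+1) ω : ℝ)) ((c0/2) * ((n:ℝ)+1)) with hc | hc
          · exact Or.inr ⟨h, hc⟩
          · exact Or.inl ⟨h, hc⟩
        · rintro (⟨h, _⟩ | ⟨h, _⟩) <;> exact h
      have hdisj : Disjoint (Gn (n+1)) bad := by
        rw [hGn1rw]
        rw [Set.disjoint_left]
        rintro ω ⟨_, h1⟩ ⟨_, h2⟩
        simp only [Set.mem_setOf_eq] at h1 h2
        linarith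
      have hdisj2 : Disjoint (Aset K \ Gn n) bad := by
        rw [Set.disjoint_left]
        rintro ω ⟨_, h1⟩ h2
        exact h1 (hbadsub h2)
      have hsplit2 : Aset K \ Gn (n+1) = (Aset K \ Gn n) ∪ bad := by
        ext ω
        simp only [Set.mem_diff, Set.mem_union]
        constructor
        · intro ⟨hA, hG⟩
          by_cases hgn : ω ∈ Gn n
          · right
            have := hsplit ▸ hgn
            rcases this with h | h
            · exact absurd h hG
            · exact h
          · exact Or.inl ⟨hA, hgn⟩
        · rintro (⟨hA, hG⟩ | hb)
          · exact ⟨hA, fun hh => hG (hGn_anti n (n+1) (by omega) hh)⟩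
          · refine ⟨(hbadsub hb).1, fun hh => ?_⟩
            exact (Set.disjoint_left.1 hdisj) hh hb
      have hmeq : (μ (Aset K \ Gn (n+1))).toReal
          = (μ (Aset K \ Gn n)).toReal + (μ bad).toReal := by
        rw [hsplit2, measure_union hdisj2 hbad_m,
          ENNReal.toReal_add (measure_ne_top μ _) (measure_ne_top μ _)]
      have hIsplit : ∫ ω in Gn n, Mfun (n+1) ω ∂μ
          = (∫ ω in Gn (n+1), Mfun (n+1) ω ∂μ) + ∫ ω in bad, Mfun (n+1) ω ∂μ := by
        conv_lhs => rw [hsplit]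
        exact setIntegral_union hdisj hbad_m (hM_int (n+1) hnn1).integrableOn
          (hM_int (n+1) hnn1).integrableOn
      have hbadlb : lam * (μ bad).toReal ≤ ∫ ω in bad, Mfun (n+1) ω ∂μ := by
        refine setIntegral_ge_of_const_le_real hbad_m (measure_ne_top μ _) ?_
          (hM_int (n+1) hnn1).integrableOn
        intro ω hω
        have h2 : (V (n+1) ω : ℝ) ≤ (c0/2) * ((n:ℝ)+1) := hω.2
        have hX : (V (n+1) ω : ℝ) / ((n+1:ℕ):ℝ) ≤ c0/2 := by
          rw [hcastn, div_le_iff₀ (by positivity)]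
          linarith
        have hb := Hf_barrier c0 hc0 _ hX
        have h5 : (0:ℝ) ≤ 1 / ((n+1:ℕ):ℝ) := by positivity
        simp only [hMfundef, hlamdef]
        linarith
      have hkey : ∫ ω in Gn n, Mfun (n+1) ω ∂μ ≤ ∫ ω in Gn n, Mfun n ω ∂μ := by
        have hMrw : ∀ ω, Mfun (n+1) ω
            = Hf c0 ((V (n+1) ω : ℝ) / ((n:ℝ)+1)) + 1/((n:ℝ)+1) := by
          intro ω
          simp only [hMfundef, hcastn]
        calc ∫ ω in Gn n, Mfun (n+1) ω ∂μ
            = ∫ ω in Gn n, (Hf c0 ((V (n+1) ω : ℝ) / ((n:ℝ)+1)) + 1/((n:ℝ)+1)) ∂μ := by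
              exact setIntegral_congr_fun (hGn_m n hn) fun ω _ => hMrw ω
          _ ≤ ∫ ω in Gn n, (Hf c0 ((V n ω : ℝ) / (n:ℝ)) + 1/(n:ℝ)) ∂μ :=
              key_step μ ℱ V c0 hc0 hc0' n hn1 (hmeas n hn1) (hmeas (n+1) hnn1)
                (hstep n hn1) (hVle n hn1) (hcond n hn1) (hGn_measF n hn)
          _ = ∫ ω in Gn n, Mfun n ω ∂μ := rfl
      rw [hmeq]
      linarith [hbadlb, hIsplit, hkey, ih]
  -- conclusion
  set Good : Set Ω := Aset K ∩ {ω | ∀ mm, K ≤ mm → (c0/2) * (mm:ℝ) < (V mm ω : ℝ)}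
    with hGooddef
  have hGood_m : MeasurableSet Good := by
    refine hAm.inter ?_
    have hrw : {ω | ∀ mm, K ≤ mm → (c0/2) * (mm:ℝ) < (V mm ω : ℝ)}
        = ⋂ mm, {ω | K ≤ mm → (c0/2) * (mm:ℝ) < (V mm ω : ℝ)} := by
      ext ω; simp [Set.mem_iInter]
    rw [hrw]
    refine MeasurableSet.iInter fun mm => ?_
    by_cases hmm : K ≤ mm
    · have : {ω | K ≤ mm → (c0/2) * (mm:ℝ) < (V mm ω : ℝ)}
          = V mm ⁻¹' {v : ℕ | (c0/2) * (mm:ℝ) < (v:ℝ)} := by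
        ext ω; simp [hmm]
      rw [this]
      exact (hVm mm (le_trans hK1 hmm)) (by trivial)
    · have : {ω | K ≤ mm → (c0/2) * (mm:ℝ) < (V mm ω : ℝ)} = Set.univ := by
        ext ω; simp only [Set.mem_setOf_eq, Set.mem_univ, iff_true]
        intro h1; exact absurd h1 hmm
      rw [this]; exact MeasurableSet.univ
  have hdiffrw : Aset K \ Good = ⋃ j, (Aset K \ Gn (K + j)) := by
    ext ω
    simp only [Set.mem_diff, Set.mem_iUnion]
    constructor
    · intro ⟨hA, hG⟩
      have : ¬ ∀ mm, K ≤ mm → (c0/2) * (mm:ℝ) < (V mm ω : ℝ) := by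
        intro hh
        exact hG ⟨hA, hh⟩
      push_neg at this
      obtain ⟨mm, hm1, hm2⟩ := this
      refine ⟨mm - K, hA, fun hGn => ?_⟩
      have hlt := hGn.2 mm hm1 (by omega)
      linarith
    · intro ⟨j, hA, hGn⟩
      refine ⟨hA, fun hGood => ?_⟩
      exact hGn ⟨hA, fun mm hm1 _ => hGood.2 mm hm1⟩
  have hmono2 : Monotone fun j => Aset K \ Gn (K + j) := by
    intro a b hab
    exact Set.diff_subset_diff_right (hGn_anti (K+a) (K+b) (by omega))
  have hmeasU : μ (Aset K \ Good) = ⨆ j, μ (Aset K \ Gn (K+j)) := by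
    rw [hdiffrw]
    exact hmono2.directed_le.measure_iUnion
  have hlamK : 2 ≤ lam * K := by
    have h8 : (c0^2/4) * (8/c0^2) = 2 := by field_simp; ring
    have := mul_le_mul_of_nonneg_left hK8 (by positivity : (0:ℝ) ≤ c0^2/4)
    rw [h8] at this
    calc (2:ℝ) ≤ c0^2/4 * K := this
      _ = lam * K := by rw [hlamdef]; ring
  have hbound : ∀ n, K ≤ n → (μ (Aset K \ Gn n)).toReal ≤ (1/2) * (μ (Aset K)).toReal := by
    intro n hn
    have h1 := inv n hn
    have h2 : 0 ≤ ∫ ω in Gn n, Mfun n ω ∂μ :=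
      setIntegral_nonneg (hGn_m n hn) (fun ω _ => hM_nonneg n ω (le_trans hK1 hn))
    set x : ℝ := (μ (Aset K \ Gn n)).toReal with hxdef
    set a : ℝ := (μ (Aset K)).toReal with hadef
    have hx0 : 0 ≤ x := ENNReal.toReal_nonneg
    have ha0 : 0 ≤ a := ENNReal.toReal_nonneg
    have hK0 : (0:ℝ) < K := by exact_mod_cast hK1
    have h3 : lam * x ≤ (1/(K:ℝ)) * a := by linarith
    have h4 : (K:ℝ) * (lam * x) ≤ a := by
      have := mul_le_mul_of_nonneg_left h3 hK0.le
      calc (K:ℝ) * (lam * x) ≤ (K:ℝ) * ((1/(K:ℝ)) * a) := this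
        _ = a := by field_simp
    have h5 : 2 * x ≤ (lam * (K:ℝ)) * x := mul_le_mul_of_nonneg_right hlamK hx0
    have h6 : (lam * (K:ℝ)) * x = (K:ℝ) * (lam * x) := by ring
    linarith
  have hGoodtail : (μ (Aset K \ Good)).toReal ≤ (1/2) * (μ (Aset K)).toReal := by
    have hub : μ (Aset K \ Good) ≤ ENNReal.ofReal ((1/2) * (μ (Aset K)).toReal) := by
      rw [hmeasU]
      refine iSup_le fun j => ?_
      have hb := hbound (K+j) (by omega)
      calc μ (Aset K \ Gn (K+j))
          = ENNReal.ofReal ((μ (Aset K \ Gn (K+j))).toReal) :=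
            (ENNReal.ofReal_toReal (measure_ne_top μ _)).symm
        _ ≤ ENNReal.ofReal ((1/2) * (μ (Aset K)).toReal) := ENNReal.ofReal_le_ofReal hb
    calc (μ (Aset K \ Good)).toReal
        ≤ (ENNReal.ofReal ((1/2) * (μ (Aset K)).toReal)).toReal :=
          ENNReal.toReal_mono ENNReal.ofReal_ne_top hub
      _ = (1/2) * (μ (Aset K)).toReal := by
          rw [ENNReal.toReal_ofReal (by positivity)]
  have hGoodlb : c0^K / 2 ≤ (μ Good).toReal := by
    have hsub : Aset K ⊆ Good ∪ (Aset K \ Good) := by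
      intro ω h
      by_cases hg : ω ∈ Good
      · exact Or.inl hg
      · exact Or.inr ⟨h, hg⟩
    have h1 : μ (Aset K) ≤ μ Good + μ (Aset K \ Good) :=
      le_trans (measure_mono hsub) (measure_union_le _ _)
    have h2 : (μ (Aset K)).toReal ≤ (μ Good).toReal + (μ (Aset K \ Good)).toReal := by
      have hne : μ Good + μ (Aset K \ Good) ≠ ⊤ :=
        ENNReal.add_ne_top.2 ⟨measure_ne_top μ _, measure_ne_top μ _⟩
      have := ENNReal.toReal_mono hne h1
      rwa [ENNReal.toReal_add (measure_ne_top μ _) (measure_ne_top μ _)] at this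
    have h3 := hAlb K hK1
    linarith
  have hsubS : Good ⊆ {ω | ∀ n : ℕ, 1 ≤ n → (c0/2) * n < (V n ω : ℝ)} := by
    rintro ω ⟨hA, hG⟩ n hn
    rcases le_or_gt K n with h | h
    · exact hG n h
    · have hV : V n ω = n := hA n hn (by omega)
      rw [hV]
      have h1 : (1:ℝ) ≤ (n:ℝ) := by exact_mod_cast hn
      nlinarith
  calc ENNReal.ofReal (c0^K/2)
      ≤ ENNReal.ofReal ((μ Good).toReal) := ENNReal.ofReal_le_ofReal hGoodlb
    _ = μ Good := ENNReal.ofReal_toReal (measure_ne_top μ _)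
    _ ≤ μ {ω | ∀ n : ℕ, 1 ≤ n → (c0/2) * n < (V n ω : ℝ)} := measure_mono hsubS
end
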